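/- Let σ : ℝ → ℝ be any continuous sigmoidal function, i.e., σ(t) → 1 as t → +∞ and σ(t) → 0 as t → −∞. Then the finite sums of the form G(x) = Σ_{j=1}^{M} α_j σ(⟨y_j, x⟩ + β_j), with M ∈ ℕ, α_j, β_j ∈ ℝ, y_j ∈ ℝ^n, are dense in C(I_n) with respect to the supremum norm: for every continuous f : I_n → ℝ and every ε > 0 there exists such a finite sum G with |G(x) − f(x)| < ε for all x ∈ I_n. -/
import Mathlib


open Filter Real

open Pointwise

lemma sigmoid_bounded (σ : ℝ → ℝ) (hc : Continuous σ)
    (h1 : Tendsto σ atTop (nhds 1)) (h0 : Tendsto σ atBot (nhds 0)) :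
    ∃ B : ℝ, 1 ≤ B ∧ ∀ t, |σ t| ≤ B := by
  obtain ⟨T1, hT1⟩ := eventually_atTop.mp (Metric.tendsto_nhds.mp h1 1 one_pos)
  obtain ⟨T0, hT0⟩ := eventually_atBot.mp (Metric.tendsto_nhds.mp h0 1 one_pos)
  obtain ⟨C, hC⟩ := (isCompact_Icc (a := min T0 (-|T1|)) (b := max T1 |T0|)).exists_bound_of_continuousOn
    hc.continuousOn
  refine ⟨max (C + 2) 2, le_trans (by norm_num) (le_max_right _ _), fun t => ?_⟩
  rcases le_or_gt t (min T0 (-|T1|)) with h | h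
  · have h' := hT0 t (h.trans (min_le_left _ _))
    rw [Real.dist_eq, sub_zero] at h'
    exact le_trans (by linarith [h'.le]) (le_max_right _ _)
  rcases le_or_gt t (max T1 |T0|) with h2 | h2
  · have := hC t ⟨h.le, h2⟩
    rw [Real.norm_eq_abs] at this
    exact this.trans ((by linarith : C ≤ C + 2).trans (le_max_left _ _))
  · have h' := hT1 t (le_of_lt (lt_of_le_of_lt (le_max_left T1 |T0|) h2))
    rw [Real.dist_eq] at h'
    have hh := abs_sub_abs_le_abs_sub (σ t) 1
    rw [abs_one] at hh
    exact le_trans (by linarith [h'.le]) (le_max_right _ _)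

lemma sig1d (σ : ℝ → ℝ) (hc : Continuous σ)
    (h1 : Tendsto σ atTop (nhds 1)) (h0 : Tendsto σ atBot (nhds 0))
    (g : ℝ → ℝ) (hg : Continuous g) (R ε : ℝ) (hR : 0 < R) (hε : 0 < ε) :
    ∃ (M : ℕ) (α β lam : Fin M → ℝ),
      ∀ t ∈ Set.Icc (-R) R, |(∑ j, α j * σ (lam j * t + β j)) - g t| < ε := by
  obtain ⟨B, hB1, hB⟩ := sigmoid_bounded σ hc h1 h0
  have hBpos : (0:ℝ) < B := lt_of_lt_of_le one_pos hB1
  set ε₁ : ℝ := ε / (2*(B+1)) with hε₁def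
  have hε₁ : 0 < ε₁ := by positivity
  -- uniform continuity of g on [-R,R]
  have hUC : UniformContinuousOn g (Set.Icc (-R) R) :=
    (isCompact_Icc).uniformContinuousOn_of_continuous hg.continuousOn
  obtain ⟨δ, hδpos, hδ⟩ := Metric.uniformContinuousOn_iff.mp hUC ε₁ hε₁
  -- bound on g
  obtain ⟨G0, hG0⟩ := (isCompact_Icc (a := -R) (b := R)).exists_bound_of_continuousOn hg.continuousOn
  set G : ℝ := max G0 1 with hGdef
  have hG1 : (1:ℝ) ≤ G := le_max_right _ _
  have hGpos : (0:ℝ) < G := lt_of_lt_of_le one_pos hG1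
  have hG : ∀ s ∈ Set.Icc (-R) R, |g s| ≤ G := fun s hs =>
    le_trans (by simpa using hG0 s hs) (le_max_left _ _)
  -- number of intervals
  set N : ℕ := ⌈2*R/δ⌉₊ + 1 with hNdef
  have hNpos : 0 < N := Nat.succ_pos _
  have hNR : (N:ℝ) > 2*R/δ := lt_of_le_of_lt (Nat.le_ceil _) (by exact_mod_cast Nat.lt_succ_self _)
  set h : ℝ := 2*R/N with hhdef
  have hhpos : 0 < h := by positivity
  have hhδ : h < δ := by
    rw [hhdef, div_lt_iff₀ (by positivity)]
    calc 2*R = (2*R/δ) * δ := by field_simp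
    _ < N * δ := by apply mul_lt_mul_of_pos_right hNR hδpos
    _ = δ * N := mul_comm _ _
  have hNh : (N:ℝ) * h = 2*R := by
    rw [hhdef]; field_simp
  set tp : ℕ → ℝ := fun i => -R + i * h with htpdef
  have htp0 : tp 0 = -R := by simp [htpdef]
  have htpmem : ∀ i ≤ N, tp i ∈ Set.Icc (-R) R := by
    intro i hi
    have hi' : (i:ℝ) ≤ N := by exact_mod_cast hi
    constructor
    · simp [htpdef]; positivity
    · simp only [htpdef]
      nlinarith [mul_le_mul_of_nonneg_right hi' hhpos.le]
  set Δ : ℕ → ℝ := fun i => g (tp (i+1)) - g (tp i) with hΔdef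
  have hΔbound : ∀ i < N, |Δ i| ≤ 2*G := by
    intro i hi
    have h1' := hG _ (htpmem (i+1) hi)
    have h2' := hG _ (htpmem i hi.le)
    calc |Δ i| ≤ |g (tp (i+1))| + |g (tp i)| := abs_sub _ _
    _ ≤ 2*G := by linarith
  have hΔsmall : ∀ i < N, |Δ i| < ε₁ := by
    intro i hi
    have := hδ _ (htpmem (i+1) hi) _ (htpmem i hi.le) (by
      rw [Real.dist_eq]
      have : tp (i+1) - tp i = h := by simp [htpdef]; push_cast; ring
      rw [this, abs_of_pos hhpos]; exact hhδ)
    simpa [Real.dist_eq, hΔdef] using this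
  -- tail smallness threshold
  set η : ℝ := ε / (2*(2*N+1)*G) with hηdef
  have hηpos : 0 < η := by positivity
  obtain ⟨T1, hT1⟩ := eventually_atTop.mp (Metric.tendsto_nhds.mp h1 η hηpos)
  obtain ⟨T0, hT0⟩ := eventually_atBot.mp (Metric.tendsto_nhds.mp h0 η hηpos)
  set T : ℝ := max T1 (-T0) with hTdef
  have keytop : ∀ z : ℝ, |T| + 1 ≤ z → |σ z - 1| < η := by
    intro z hz
    have : T1 ≤ z := le_trans (le_trans (le_max_left _ _) (le_abs_self T)) (by linarith)
    simpa [Real.dist_eq] using hT1 z this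
  have keybot : ∀ z : ℝ, z ≤ -(|T| + 1) → |σ z| < η := by
    intro z hz
    have h' : -T0 ≤ |T| := le_trans (le_max_right _ _) (le_abs_self T)
    have : z ≤ T0 := by linarith
    simpa [Real.dist_eq] using hT0 z this
  set c : ℝ := min (h/2) 1 with hcdef
  have hcpos : 0 < c := lt_min (by positivity) one_pos
  set K : ℝ := (|T|+1)/c with hKdef
  have hKpos : 0 < K := by positivity
  have hKc : K * c = |T| + 1 := by rw [hKdef]; field_simp
  -- the approximant (scalar form)
  set m : ℕ → ℝ := fun i => -R + i * h + h/2 with hmdef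
  set S : ℝ → ℝ := fun t =>
    g (-R) * σ (K*t + K*(R+1)) + ∑ i ∈ Finset.range N, Δ i * σ (K*t + -(K * m i)) with hSdef
  -- main pointwise estimate
  have main : ∀ t ∈ Set.Icc (-R) R, |S t - g t| < ε := by
    rintro t ⟨htl, htr⟩
    set u : ℝ := (t + R)/h with hudef
    have hu0 : 0 ≤ u := div_nonneg (by linarith) hhpos.le
    have huN : u ≤ N := by
      rw [hudef, div_le_iff₀ hhpos]
      linarith [hNh]
    set j : ℕ := min (⌊u⌋.toNat) (N-1) with hjdef
    have hjN : j < N := lt_of_le_of_lt (min_le_right _ _) (Nat.pred_lt hNpos.ne')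
    have hju : (j:ℝ) ≤ u := by
      have h1' : (j:ℕ) ≤ ⌊u⌋.toNat := min_le_left _ _
      have h3 : (⌊u⌋.toNat : ℤ) = ⌊u⌋ := Int.toNat_of_nonneg (Int.floor_nonneg.mpr hu0)
      have h2a : ((⌊u⌋.toNat : ℤ) : ℝ) ≤ u := by rw [h3]; exact Int.floor_le u
      have h2' : ((⌊u⌋.toNat : ℕ):ℝ) ≤ u := by exact_mod_cast h2a
      exact le_trans (by exact_mod_cast h1') h2'
    have huj1 : u ≤ (j:ℝ) + 1 := by
      rcases le_or_gt (⌊u⌋.toNat) (N-1) with hcase | hcase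
      · have : j = ⌊u⌋.toNat := min_eq_left hcase
        rw [this]
        have h3 : (⌊u⌋.toNat : ℤ) = ⌊u⌋ := Int.toNat_of_nonneg (Int.floor_nonneg.mpr hu0)
        have hfl := Int.lt_floor_add_one u
        have h2a : u < ((⌊u⌋.toNat : ℤ) : ℝ) + 1 := by rw [h3]; exact hfl
        have h2' : u < ((⌊u⌋.toNat : ℕ):ℝ) + 1 := by exact_mod_cast h2a
        exact h2'.le
      · have : j = N-1 := min_eq_right hcase.le
        rw [this]
        have : ((N-1:ℕ):ℝ) + 1 = (N:ℝ) := by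
          have := hNpos
          push_cast [Nat.cast_sub hNpos]
          ring
        rw [this]; exact huN
    have htj : tp j ≤ t := by
      have := mul_le_mul_of_nonneg_right hju hhpos.le
      rw [hudef] at this
      simp only [htpdef]
      rw [div_mul_cancel₀ _ hhpos.ne'] at this
      linarith
    have htj1 : t ≤ tp (j+1) := by
      have := mul_le_mul_of_nonneg_right huj1 hhpos.le
      rw [hudef, div_mul_cancel₀ _ hhpos.ne'] at this
      simp only [htpdef]
      push_cast
      linarith
    -- per-term estimates
    have hterm : ∀ i ∈ Finset.range N,
        |Δ i * σ (K*t + -(K * m i)) - (if i < j then Δ i else 0)|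
          ≤ 2*G*η + (if i = j then ε₁*B else 0) := by
      intro i hi
      rw [Finset.mem_range] at hi
      rcases lt_trichotomy i j with hij | hij | hij
      · -- i < j : σ ≈ 1
        have hij' : ((i:ℝ)+1) ≤ (j:ℝ) := by exact_mod_cast hij
        have harg : |T| + 1 ≤ K*t + -(K * m i) := by
          have h1' : c ≤ t - m i := by
            have : tp j ≤ t := htj
            simp only [htpdef] at this
            have hc' : c ≤ h/2 := min_le_left _ _
            simp only [hmdef]
            have hp := mul_le_mul_of_nonneg_right hij' hhpos.le
            linarith [hp]
          have h2p := mul_le_mul_of_nonneg_left h1' hKpos.le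
          rw [mul_sub] at h2p
          linarith [h2p, hKc.ge]
        have := keytop _ harg
        simp only [if_pos hij, if_neg (Nat.ne_of_lt hij)]
        calc |Δ i * σ (K*t + -(K * m i)) - Δ i| = |Δ i| * |σ (K*t + -(K * m i)) - 1| := by
              rw [← abs_mul]; ring_nf
        _ ≤ (2*G) * η := mul_le_mul (hΔbound i hi) this.le (abs_nonneg _) (by positivity)
        _ ≤ 2*G*η + 0 := by linarith
      · -- i = j : bounded term
        subst hij
        simp only [if_neg (lt_irrefl j), if_pos rfl, sub_zero]
        calc |Δ j * σ (K*t + -(K * m j))| = |Δ j| * |σ (K*t + -(K * m j))| := abs_mul _ _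
        _ ≤ ε₁ * B := mul_le_mul (hΔsmall j hi).le (hB _) (abs_nonneg _) hε₁.le
        _ ≤ 2*G*η + ε₁*B := by
              have : (0:ℝ) ≤ 2*G*η := by positivity
              linarith
      · -- i > j : σ ≈ 0
        have hij' : ((j:ℝ)+1) ≤ (i:ℝ) := by exact_mod_cast hij
        have harg : K*t + -(K * m i) ≤ -(|T| + 1) := by
          have h1' : t - m i ≤ -c := by
            have : t ≤ tp (j+1) := htj1
            simp only [htpdef] at this
            push_cast at this
            have hc' : c ≤ h/2 := min_le_left _ _
            simp only [hmdef]
            have hp := mul_le_mul_of_nonneg_right hij' hhpos.le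
            linarith [hp]
          have h2p := mul_le_mul_of_nonneg_left h1' hKpos.le
          rw [mul_sub] at h2p
          linarith [h2p, hKc.ge]
        have := keybot _ harg
        simp only [if_neg (by omega : ¬ i < j), if_neg (by omega : ¬ i = j), sub_zero]
        calc |Δ i * σ (K*t + -(K * m i))| = |Δ i| * |σ (K*t + -(K * m i))| := abs_mul _ _
        _ ≤ (2*G) * η := mul_le_mul (hΔbound i hi) this.le (abs_nonneg _) (by positivity)
        _ ≤ 2*G*η + 0 := by linarith
    -- telescoping
    have telescope : (∑ i ∈ Finset.range N, (if i < j then Δ i else 0)) = g (tp j) - g (-R) := by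
      have hfil : (Finset.range N).filter (· < j) = Finset.range j := by
        ext a; simp only [Finset.mem_filter, Finset.mem_range]; omega
      rw [← Finset.sum_filter, hfil]
      have := Finset.sum_range_sub (fun i => g (tp i)) j
      rw [htp0] at this
      exact this
    -- decomposition
    have decomp : S t - g t = g (-R) * (σ (K*t + K*(R+1)) - 1)
        + (∑ i ∈ Finset.range N, (Δ i * σ (K*t + -(K * m i)) - (if i < j then Δ i else 0)))
        + (g (tp j) - g t) := by
      rw [Finset.sum_sub_distrib, telescope, hSdef]
      ring
    -- constant-term estimate
    have hconst : |σ (K*t + K*(R+1)) - 1| < η := by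
      apply keytop
      have h1' : c ≤ t + (R+1) := le_trans (min_le_right _ _) (by linarith)
      have h2p := mul_le_mul_of_nonneg_left h1' hKpos.le
      rw [mul_add] at h2p
      linarith [h2p, hKc.ge]
    -- last-term estimate
    have hlast : |g (tp j) - g t| < ε₁ := by
      have htpj1 : tp (j+1) = tp j + h := by
        simp only [htpdef]; push_cast; ring
      have hd : dist (tp j) t < δ := by
        rw [Real.dist_eq, abs_sub_comm, abs_of_nonneg (by linarith [htj])]
        linarith [htj1, hhδ]
      have := hδ _ (htpmem j hjN.le) t ⟨htl, htr⟩ hd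
      simpa [Real.dist_eq] using this
    -- sum the per-term bounds
    have hsum := Finset.sum_le_sum hterm
    have hsum2 : (∑ i ∈ Finset.range N, (2*G*η + (if i = j then ε₁*B else 0)))
        = N*(2*G*η) + ε₁*B := by
      rw [Finset.sum_add_distrib, Finset.sum_const, Finset.card_range,
        Finset.sum_ite_eq' (Finset.range N) j (fun _ => ε₁*B),
        if_pos (Finset.mem_range.mpr hjN)]
      simp [nsmul_eq_mul]
    have hgR : |g (-R)| ≤ G := hG _ ⟨le_refl _, by linarith⟩
    have habs : |S t - g t| ≤ G * η + (N*(2*G*η) + ε₁*B) + |g (tp j) - g t| := by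
      rw [decomp]
      calc |g (-R) * (σ (K*t + K*(R+1)) - 1)
            + (∑ i ∈ Finset.range N, (Δ i * σ (K*t + -(K * m i)) - (if i < j then Δ i else 0)))
            + (g (tp j) - g t)|
          ≤ |g (-R) * (σ (K*t + K*(R+1)) - 1)|
            + |∑ i ∈ Finset.range N, (Δ i * σ (K*t + -(K * m i)) - (if i < j then Δ i else 0))|
            + |g (tp j) - g t| := abs_add_three _ _ _
        _ ≤ G * η + (N*(2*G*η) + ε₁*B) + |g (tp j) - g t| := by
            gcongr ?_ + ?_ + _
            · rw [abs_mul]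
              exact mul_le_mul hgR hconst.le (abs_nonneg _) hGpos.le
            · exact le_trans (Finset.abs_sum_le_sum_abs _ _) (le_trans hsum hsum2.le)
    have e1 : G * η * (2*(N:ℝ)+1) = ε/2 := by
      rw [hηdef]; field_simp
    have e2 : ε₁ * (B+1) = ε/2 := by
      rw [hε₁def]; field_simp
    calc |S t - g t| ≤ G * η + (N*(2*G*η) + ε₁*B) + |g (tp j) - g t| := habs
      _ < G * η + (N*(2*G*η) + ε₁*B) + ε₁ := by linarith [hlast]
      _ = G * η * (2*(N:ℝ)+1) + ε₁ * (B+1) := by ring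
      _ = ε := by rw [e1, e2]; ring
  -- package as a Fin (N+1) sum
  refine ⟨N+1, Fin.cons (g (-R)) (fun i : Fin N => Δ (i:ℕ)),
    Fin.cons (K*(R+1)) (fun i : Fin N => -(K * m (i:ℕ))), fun _ => K, ?_⟩
  intro t ht
  have hst : (∑ jj : Fin (N+1),
      (Fin.cons (g (-R)) (fun i : Fin N => Δ (i:ℕ)) : Fin (N+1) → ℝ) jj *
        σ (K * t + (Fin.cons (K*(R+1)) (fun i : Fin N => -(K * m (i:ℕ))) : Fin (N+1) → ℝ) jj))
      = S t := by
    rw [Fin.sum_univ_succ]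
    simp only [Fin.cons_zero, Fin.cons_succ]
    rw [hSdef]
    congr 1
    rw [← Fin.sum_univ_eq_sum_range (fun i => Δ i * σ (K*t + -(K * m i))) N]
  simpa [hst] using main t ht



lemma exp_dense (n : ℕ) (f : (Fin n → ℝ) → ℝ)
    (hf : ContinuousOn f (Set.Icc (0 : Fin n → ℝ) 1)) (ε : ℝ) (hε : 0 < ε) :
    ∃ (K : ℕ) (c : Fin K → ℝ) (a : Fin K → Fin n → ℝ),
      ∀ x ∈ Set.Icc (0 : Fin n → ℝ) 1,
        |(∑ k, c k * Real.exp (∑ i, a k i * x i)) - f x| < ε := by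
  haveI : CompactSpace (Set.Icc (0 : Fin n → ℝ) 1) :=
    isCompact_iff_compactSpace.mp isCompact_Icc
  set X := Set.Icc (0 : Fin n → ℝ) 1 with hXdef
  set expC : (Fin n → ℝ) → C(X, ℝ) := fun a =>
    ⟨fun x => Real.exp (∑ i, a i * (x : Fin n → ℝ) i), by
      apply Real.continuous_exp.comp
      exact continuous_finset_sum _ fun i _ =>
        (continuous_const.mul ((continuous_apply i).comp continuous_subtype_val))⟩ with hexpC
  set E : Set C(X, ℝ) := Set.range expC with hEdef
  set p : Submodule ℝ C(X, ℝ) := Submodule.span ℝ E with hpdef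
  have h_one : (1 : C(X, ℝ)) ∈ p := Submodule.subset_span ⟨0, by ext x; simp [hexpC]⟩
  have hEE : E * E ⊆ E := by
    rintro w ⟨u, ⟨au, rfl⟩, v, ⟨av, rfl⟩, rfl⟩
    refine ⟨au + av, ?_⟩
    ext x
    simp [hexpC, ← Real.exp_add, ← Finset.sum_add_distrib, add_mul]
  have h_mul : ∀ u v : C(X, ℝ), u ∈ p → v ∈ p → u * v ∈ p := by
    intro u v hu hv
    have h1 : u * v ∈ p * p := Submodule.mul_mem_mul hu hv
    rw [hpdef, Submodule.span_mul_span] at h1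
    exact Submodule.span_le.mpr (hEE.trans Submodule.subset_span) h1
  set A : Subalgebra ℝ C(X, ℝ) := p.toSubalgebra h_one h_mul with hAdef
  have hsep : A.SeparatesPoints := by
    rintro ⟨x, hx⟩ ⟨y, hy⟩ hxy
    have hex : ∃ i, x i ≠ y i := by
      by_contra hcon
      push_neg at hcon
      exact hxy (Subtype.ext (funext hcon))
    obtain ⟨i, hi⟩ := hex
    refine ⟨(expC (Pi.single i 1) : X → ℝ),
      ⟨expC (Pi.single i 1), Submodule.subset_span ⟨Pi.single i 1, rfl⟩, rfl⟩, ?_⟩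
    have hval : ∀ z : Fin n → ℝ, (∑ i', (Pi.single i (1:ℝ) : Fin n → ℝ) i' * z i') = z i := by
      intro z
      simp [Pi.single_apply, ite_mul]
    simp only [hexpC, ContinuousMap.coe_mk, hval]
    exact fun hcon => hi (Real.exp_eq_exp.mp hcon)
  obtain ⟨gA, hgA⟩ := ContinuousMap.exists_mem_subalgebra_near_continuous_of_separatesPoints
    A hsep (fun x : X => f x) (hf.restrict) ε hε
  have hmem : (gA : C(X, ℝ)) ∈ p := gA.2
  obtain ⟨K, c, v, hsum⟩ := Submodule.mem_span_set'.mp hmem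
  choose a ha using fun k => (v k).2
  refine ⟨K, c, a, fun x hx => ?_⟩
  have hval : (gA : C(X, ℝ)) ⟨x, hx⟩ = ∑ k, c k * Real.exp (∑ i, a k i * x i) := by
    rw [← hsum]
    have : ∀ k, ((v k : C(X, ℝ)) : X → ℝ) = fun z : X => Real.exp (∑ i, a k i * (z : Fin n → ℝ) i) := by
      intro k
      rw [← ha k]
      rfl
    simp only [ContinuousMap.coe_sum, Finset.sum_apply, ContinuousMap.coe_smul, Pi.smul_apply,
      smul_eq_mul]
    congr 1
    ext k
    rw [this k]
  have := hgA ⟨x, hx⟩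
  rw [Real.norm_eq_abs] at this
  rw [← hval]
  exact this


def SigSum (n : ℕ) (σ : ℝ → ℝ) (g : (Fin n → ℝ) → ℝ) : Prop :=
  ∃ (M : ℕ) (α β : Fin M → ℝ) (y : Fin M → (Fin n → ℝ)),
    ∀ x, g x = ∑ j, α j * σ ((∑ i, y j i * x i) + β j)

lemma SigSum.zero (n : ℕ) (σ : ℝ → ℝ) : SigSum n σ 0 :=
  ⟨0, ![], ![], ![], fun x => by simp⟩

lemma SigSum.add {n : ℕ} {σ : ℝ → ℝ} {g1 g2 : (Fin n → ℝ) → ℝ}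
    (h1 : SigSum n σ g1) (h2 : SigSum n σ g2) : SigSum n σ (g1 + g2) := by
  obtain ⟨M1, α1, β1, y1, e1⟩ := h1
  obtain ⟨M2, α2, β2, y2, e2⟩ := h2
  refine ⟨M1 + M2, Fin.append α1 α2, Fin.append β1 β2, Fin.append y1 y2, fun x => ?_⟩
  rw [Pi.add_apply, e1 x, e2 x, Fin.sum_univ_add]
  simp [Fin.append_left, Fin.append_right]

/-- **Universal Approximation Theorem (Cybenko).**
If `σ : ℝ → ℝ` is a continuous sigmoidal function (`σ t → 1` as `t → ∞`,
`σ t → 0` as `t → -∞`), then finite sums `x ↦ ∑ j, α j * σ (⟪y j, x⟫ + β j)`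
are dense in `C(I_n)` (sup norm) on the unit cube `I_n = [0,1]^n`. -/
theorem universal_approximation
    (n : ℕ) (σ : ℝ → ℝ) (hσ_cont : Continuous σ)
    (hσ_top : Tendsto σ atTop (nhds 1))
    (hσ_bot : Tendsto σ atBot (nhds 0))
    (f : (Fin n → ℝ) → ℝ)
    (hf : ContinuousOn f (Set.Icc (0 : Fin n → ℝ) 1))
    (ε : ℝ) (hε : 0 < ε) :
    ∃ (M : ℕ) (α : Fin M → ℝ) (β : Fin M → ℝ) (y : Fin M → (Fin n → ℝ)),
      ∀ x ∈ Set.Icc (0 : Fin n → ℝ) 1,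
        |(∑ j, α j * σ ((∑ i, y j i * x i) + β j)) - f x| < ε := by
  obtain ⟨K, c, a, hKapprox⟩ := exp_dense n f hf (ε/2) (by linarith)
  set ε' : ℝ := ε/(2*(K+1)) with hε'def
  have hε' : 0 < ε' := by positivity
  have hsig : ∀ k : Fin K, ∃ gk : (Fin n → ℝ) → ℝ, SigSum n σ gk ∧
      ∀ x ∈ Set.Icc (0:Fin n → ℝ) 1,
        |gk x - c k * Real.exp (∑ i, a k i * x i)| < ε' := by
    intro k
    set R : ℝ := (∑ i, |a k i|) + 1 with hRdef
    have hRpos : 0 < R := by positivity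
    obtain ⟨M, α, β, lam, hap⟩ := sig1d σ hσ_cont hσ_top hσ_bot
      (fun t => c k * Real.exp t) (by continuity) R ε' hRpos hε'
    refine ⟨fun x => ∑ j, α j * σ ((∑ i, (lam j * a k i) * x i) + β j),
      ⟨M, α, β, fun j => fun i => lam j * a k i, fun x => rfl⟩, fun x hx => ?_⟩
    have habs : |∑ i, a k i * x i| ≤ ∑ i, |a k i| := by
      refine le_trans (Finset.abs_sum_le_sum_abs _ _) ?_
      refine Finset.sum_le_sum fun i _ => ?_
      rw [abs_mul]
      have hx0 : (0:ℝ) ≤ x i := hx.1 i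
      have hx1 : x i ≤ 1 := hx.2 i
      calc |a k i| * |x i| ≤ |a k i| * 1 := by
            refine mul_le_mul_of_nonneg_left ?_ (abs_nonneg _)
            rw [abs_of_nonneg hx0]; exact hx1
      _ = |a k i| := mul_one _
    have hxmem : (∑ i, a k i * x i) ∈ Set.Icc (-R) R := by
      rw [Set.mem_Icc]
      obtain ⟨hl, hr⟩ := abs_le.mp habs
      constructor <;> [linarith; linarith]
    have hthis := hap _ hxmem
    have harg : ∀ j, (∑ i, (lam j * a k i) * x i) + β j
        = lam j * (∑ i, a k i * x i) + β j := by
      intro j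
      rw [Finset.mul_sum]
      congr 1
      refine Finset.sum_congr rfl fun i _ => by ring
    calc |(∑ j, α j * σ ((∑ i, (lam j * a k i) * x i) + β j))
          - c k * Real.exp (∑ i, a k i * x i)|
        = |(∑ j, α j * σ (lam j * (∑ i, a k i * x i) + β j))
          - c k * Real.exp (∑ i, a k i * x i)| := by
          congr 2
          exact Finset.sum_congr rfl fun j _ => by rw [harg j]
      _ < ε' := hthis
  choose gk hgk1 hgk2 using hsig
  have hG : SigSum n σ (∑ k, gk k) :=
    Finset.sum_induction _ _ (fun _ _ ha hb => SigSum.add ha hb) (SigSum.zero n σ)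
      (fun k _ => hgk1 k)
  obtain ⟨M, α, β, y, hGe⟩ := hG
  refine ⟨M, α, β, y, fun x hx => ?_⟩
  rw [← hGe x]
  have hx' := hKapprox x hx
  have h1 : |(∑ k, gk k) x - ∑ k, c k * Real.exp (∑ i, a k i * x i)| ≤ ∑ _k : Fin K, ε' := by
    rw [Finset.sum_apply, ← Finset.sum_sub_distrib]
    exact le_trans (Finset.abs_sum_le_sum_abs _ _)
      (Finset.sum_le_sum fun k _ => (hgk2 k x hx).le)
  have h2 : (∑ _k : Fin K, ε') = K * ε' := by
    simp [Finset.sum_const, nsmul_eq_mul]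
  have h3 : (K:ℝ) * ε' ≤ ε/2 := by
    rw [hε'def, mul_div_assoc', div_le_div_iff₀ (by positivity) (by norm_num)]
    nlinarith [hε.le, (Nat.cast_nonneg K : (0:ℝ) ≤ (K:ℝ))]
  calc |(∑ k, gk k) x - f x|
      ≤ |(∑ k, gk k) x - ∑ k, c k * Real.exp (∑ i, a k i * x i)|
        + |(∑ k, c k * Real.exp (∑ i, a k i * x i)) - f x| := abs_sub_le _ _ _
    _ < ε := by
        rw [h2] at h1
        linarith
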